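/- arXiv:0902.3265 — 2 statements merged into one kernel-verified Lean document; each statement's English description precedes it below -/
import Mathlib

section
/- Let G be a graph and let G' be the 1-subdivision of G. If π(G') ≤ k and χ_a(G) ≤ ℓ, then π(G) ≤ ℓ·(k(k+1)(2k+1))^{ℓ−1}. -/
open SimpleGraph MeasureTheory Filter

/-! ### Subdivisions -/

/-- A witness that the graph `H` is a subdivision of the graph `G`:  `H` is obtained from `G`
by replacing each edge `ab` of `G` by a path between (the copies of) `a` and `b` whose internal
(division) vertices are new and pairwise distinct. -/
structure SubdivisionWitness {V : Type*} {W : Type*} (G : SimpleGraph V) (H : SimpleGraph W) where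
  emb : V ↪ W
  path : ∀ ⦃a b : V⦄, G.Adj a b → H.Walk (emb a) (emb b)
  path_isPath : ∀ ⦃a b : V⦄ (h : G.Adj a b), (path h).IsPath
  path_symm : ∀ ⦃a b : V⦄ (h : G.Adj a b), path h.symm = (path h).reverse
  internal_new : ∀ ⦃a b : V⦄ (h : G.Adj a b) (x : V),
    emb x ∈ (path h).support → x = a ∨ x = b
  internally_disjoint : ∀ ⦃a b a' b' : V⦄ (h : G.Adj a b) (h' : G.Adj a' b'),
    s(a, b) ≠ s(a', b') → ∀ w : W, w ∈ (path h).support → w ∈ (path h').support →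
      ∃ x : V, emb x = w
  vert_cover : ∀ w : W,
    (∃ x : V, emb x = w) ∨ ∃ (a b : V) (h : G.Adj a b), w ∈ (path h).support
  edge_cover : ∀ e ∈ H.edgeSet, ∃ (a b : V) (h : G.Adj a b), e ∈ (path h).edges

/-- `H` is a subdivision of `G`. -/
def IsSubdivision {V W : Type*} (G : SimpleGraph V) (H : SimpleGraph W) : Prop :=
  Nonempty (SubdivisionWitness G H)

/-- `H` is a `(≤ t)`-subdivision of `G`: a subdivision with at most `t` division vertices
per edge (i.e. each replacing path has length at most `t + 1`). -/
def IsLESubdivision {V W : Type*} (t : ℕ) (G : SimpleGraph V) (H : SimpleGraph W) : Prop :=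
  ∃ S : SubdivisionWitness G H, ∀ ⦃a b : V⦄ (h : G.Adj a b), (S.path h).length ≤ t + 1

/-- `H` is the `t`-subdivision of `G`: exactly `t` division vertices on each edge. -/
def IsExactSubdivision {V W : Type*} (t : ℕ) (G : SimpleGraph V) (H : SimpleGraph W) : Prop :=
  ∃ S : SubdivisionWitness G H, ∀ ⦃a b : V⦄ (h : G.Adj a b), (S.path h).length = t + 1

/-! ### Shallow topological minors and the top-grad -/

/-- `H` is a shallow topological minor of `G` at depth `d`:  some `(≤ 2d)`-subdivision of `H`
is isomorphic to a subgraph of `G`. -/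
def IsShallowTopMinor {W V : Type*} (d : ℕ) (H : SimpleGraph W) (G : SimpleGraph V) : Prop :=
  ∃ (m : ℕ) (S : SimpleGraph (Fin m)),
    IsLESubdivision (2 * d) H S ∧ ∃ f : S →g G, Function.Injective f

/-- The topological greatest reduced average density (top-grad) `∇̃_d(G)` of rank `d`:
the maximum of `‖H‖/|H|` over all shallow topological minors `H` of `G` at depth `d`
with at least one vertex. -/
noncomputable def topGrad {V : Type*} (d : ℕ) (G : SimpleGraph V) : ℝ :=
  sSup {q : ℝ | ∃ (m : ℕ) (H : SimpleGraph (Fin m)), 0 < m ∧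
    IsShallowTopMinor d H G ∧ q = (Nat.card H.edgeSet : ℝ) / m}

/-! ### Shallow minors, the grad, and bounded expansion -/

/-- `H` is a shallow minor of `G` at depth `d`: it is obtained from `G` by contracting
pairwise disjoint connected subgraphs (branch sets) of radius at most `d` and taking
a simple subgraph of the result. -/
def IsShallowMinor {W V : Type*} (d : ℕ) (H : SimpleGraph W) (G : SimpleGraph V) : Prop :=
  ∃ B : W → Set V,
    (∀ i, (B i).Nonempty) ∧
    (∀ i j, i ≠ j → Disjoint (B i) (B j)) ∧
    (∀ i : W, ∃ c : (B i), ∀ v : (B i), ∃ p : (G.induce (B i)).Walk c v, p.length ≤ d) ∧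
    (∀ i j : W, H.Adj i j → ∃ u ∈ B i, ∃ v ∈ B j, G.Adj u v)

/-- The greatest reduced average density (grad) `∇_d(G)` of rank `d`. -/
noncomputable def grad {V : Type*} (d : ℕ) (G : SimpleGraph V) : ℝ :=
  sSup {q : ℝ | ∃ (m : ℕ) (H : SimpleGraph (Fin m)), 0 < m ∧
    IsShallowMinor d H G ∧ q = (Nat.card H.edgeSet : ℝ) / m}

/-- A class of finite simple graphs, represented by graphs on `Fin n` for all `n`. -/
abbrev GraphClass := Set ((n : ℕ) × SimpleGraph (Fin n))

/-- A class of graphs has bounded expansion if `∇_d` is bounded on the class by a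
function of `d`. -/
def BoundedExpansion (C : GraphClass) : Prop :=
  ∃ f : ℕ → ℝ, ∀ G ∈ C, ∀ d : ℕ, grad d G.2 ≤ f d

/-! ### Graph parameters -/

/-- A graph parameter is isomorphism-invariant. -/
def IsoInvariant (α : ((n : ℕ) × SimpleGraph (Fin n)) → ℝ) : Prop :=
  ∀ G H : (n : ℕ) × SimpleGraph (Fin n), Nonempty (G.2 ≃g H.2) → α G = α H

/-- A graph parameter is strongly topological: `α(G)` and `α(H)` bound each other through a
fixed non-decreasing function, whenever `H` is a `(≤1)`-subdivision of `G`. -/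
def StronglyTopological (α : ((n : ℕ) × SimpleGraph (Fin n)) → ℝ) : Prop :=
  ∃ f : ℝ → ℝ, Monotone f ∧ ∀ G H : (n : ℕ) × SimpleGraph (Fin n),
    IsLESubdivision 1 G.2 H.2 → α G ≤ f (α H) ∧ α H ≤ f (α G)

/-- A graph parameter is monotone: it does not increase when passing to a subgraph. -/
def MonotoneParam (α : ((n : ℕ) × SimpleGraph (Fin n)) → ℝ) : Prop :=
  ∀ G H : (n : ℕ) × SimpleGraph (Fin n),
    (∃ f : H.2 →g G.2, Function.Injective f) → α H ≤ α G

/-- A graph parameter is degree-bound: every nonempty graph has a vertex of degree at most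
`f(α(G))` for some fixed function `f`. -/
def DegreeBound (α : ((n : ℕ) × SimpleGraph (Fin n)) → ℝ) : Prop :=
  ∃ f : ℝ → ℝ, ∀ G : (n : ℕ) × SimpleGraph (Fin n), 0 < G.1 →
    ∃ v : Fin G.1, (Nat.card (G.2.neighborSet v) : ℝ) ≤ f (α G)

/-! ### Queue and stack layouts -/

/-- A `k`-queue layout of `G` with respect to the linear order on `V`: an assignment of the
(potential) edges to `k` queues so that no two edges in a common queue are nested. -/
def IsQueueLayout {V : Type*} [LinearOrder V] (G : SimpleGraph V) (k : ℕ)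
    (q : Sym2 V → Fin k) : Prop :=
  ∀ ⦃a b c d : V⦄, G.Adj a b → G.Adj c d → a < b → c < d →
    q s(a, b) = q s(c, d) → ¬(a < c ∧ d < b)

/-- The signed queue function `Q`:  `Q(v,w) = q(vw)` if `v < w` and `Q(v,w) = -q(vw)`
if `w < v` (queues are numbered `1,…,k`). -/
def signedQueue {V : Type*} [LinearOrder V] {k : ℕ} (q : Sym2 V → Fin k) (v w : V) : ℤ :=
  if v < w then ((q s(v, w) : ℕ) : ℤ) + 1 else -(((q s(v, w) : ℕ) : ℤ) + 1)

/-- `G` admits a `k`-queue layout (for some vertex ordering). -/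
def HasQueueLayout {V : Type*} (G : SimpleGraph V) (k : ℕ) : Prop :=
  ∃ (ord : LinearOrder V) (q : Sym2 V → Fin k), @IsQueueLayout V ord G k q

/-- A `k`-stack layout of `G` with respect to the linear order on `V`: an assignment of the
(potential) edges to `k` stacks so that no two edges in a common stack cross. -/
def IsStackLayout {V : Type*} [LinearOrder V] (G : SimpleGraph V) (k : ℕ)
    (q : Sym2 V → Fin k) : Prop :=
  ∀ ⦃a b c d : V⦄, G.Adj a b → G.Adj c d → a < b → c < d →
    q s(a, b) = q s(c, d) → ¬(a < c ∧ c < b ∧ b < d)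

/-- `G` admits a `k`-stack layout (for some vertex ordering). -/
def HasStackLayout {V : Type*} (G : SimpleGraph V) (k : ℕ) : Prop :=
  ∃ (ord : LinearOrder V) (q : Sym2 V → Fin k), @IsStackLayout V ord G k q

/-! ### Contracting the components of a subgraph -/

/-- The equivalence relation on `V(G)` identifying the vertices in a common connected
component of the subgraph `F`. -/
def contractSetoid {V : Type*} {G : SimpleGraph V} (F : G.Subgraph) : Setoid V where
  r u v := u = v ∨ ∃ (hu : u ∈ F.verts) (hv : v ∈ F.verts),
    F.coe.Reachable ⟨u, hu⟩ ⟨v, hv⟩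
  iseqv := by
    refine ⟨fun x => Or.inl rfl, ?_, ?_⟩
    · rintro x y (rfl | ⟨hx, hy, h⟩)
      · exact Or.inl rfl
      · exact Or.inr ⟨hy, hx, h.symm⟩
    · rintro x y z (rfl | ⟨hx, hy, h⟩) hyz
      · exact hyz
      · rcases hyz with (rfl | ⟨hy', hz, h'⟩)
        · exact Or.inr ⟨hx, hy, h⟩
        · exact Or.inr ⟨hx, hz, h.trans h'⟩

/-- The simple graph obtained from `G` by contracting each connected component of the
subgraph `F` to a single vertex (deleting loops and parallel edges). -/
def contractGraph {V : Type*} {G : SimpleGraph V} (F : G.Subgraph) :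
    SimpleGraph (Quotient (contractSetoid F)) where
  Adj A B := A ≠ B ∧ ∃ u v : V, G.Adj u v ∧
    Quotient.mk (contractSetoid F) u = A ∧ Quotient.mk (contractSetoid F) v = B
  symm := by
    constructor
    rintro A B ⟨hne, u, v, h, hu, hv⟩
    exact ⟨hne.symm, v, u, h.symm, hv, hu⟩
  loopless := by
    constructor
    rintro A ⟨hne, -⟩
    exact hne rfl

/-! ### Non-repetitive and acyclic colourings -/

/-- A colouring `f` of `G` is non-repetitive if there is no path `v₀, …, v_{2s-1}` in `G`
(`s ≥ 1`, vertices pairwise distinct, consecutive vertices adjacent) with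
`f(v_i) = f(v_{i+s})` for all `i < s`. -/
def NonRepColoring {V α : Type*} (G : SimpleGraph V) (f : V → α) : Prop :=
  ∀ s : ℕ, 0 < s → ∀ v : ℕ → V,
    (∀ i, i < 2 * s → ∀ j, j < 2 * s → i ≠ j → v i ≠ v j) →
    (∀ i, i + 1 < 2 * s → G.Adj (v i) (v (i + 1))) →
    ¬(∀ i, i < s → f (v i) = f (v (i + s)))

/-- `π(G)`: the minimum number of colours in a non-repetitive colouring of `G`. -/
noncomputable def piNum {V : Type*} (G : SimpleGraph V) : ℕ :=
  sInf {k : ℕ | ∃ f : V → Fin k, NonRepColoring G f}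

/-- A proper colouring of `G` with no bichromatic cycle (every cycle receives at least
three colours). -/
def AcyclicColoring {V α : Type*} (G : SimpleGraph V) (f : V → α) : Prop :=
  (∀ u w : V, G.Adj u w → f u ≠ f w) ∧
  ∀ (u : V) (c : G.Walk u u), c.IsCycle →
    ∃ x ∈ c.support, ∃ y ∈ c.support, ∃ z ∈ c.support, f x ≠ f y ∧ f x ≠ f z ∧ f y ≠ f z

/-- `χₐ(G)`: the acyclic chromatic number of `G`. -/
noncomputable def chiA {V : Type*} (G : SimpleGraph V) : ℕ :=
  sInf {k : ℕ | ∃ f : V → Fin k, AcyclicColoring G f}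

/-! ### The Erdős–Rényi random graph `G(n, p)` -/

/-- The Erdős–Rényi measure: each potential edge (coordinate) is present independently with
probability `p` (truncated to `[0,1]`). -/
noncomputable def erdosRenyi (n : ℕ) (p : ℝ) : Measure (Sym2 (Fin n) → Bool) :=
  Measure.pi fun _ =>
    ((PMF.bernoulli (min (Real.toNNReal p) 1) (min_le_right _ _)).toMeasure)

/-- The simple graph on `Fin n` determined by an outcome `ω` of the edge indicators. -/
def graphOf {n : ℕ} (ω : Sym2 (Fin n) → Bool) : SimpleGraph (Fin n) where
  Adj u v := u ≠ v ∧ ω s(u, v) = true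
  symm := by
    constructor
    rintro u v ⟨hne, h⟩
    exact ⟨hne.symm, by rwa [Sym2.eq_swap]⟩
  loopless := by
    constructor
    rintro u ⟨hne, -⟩
    exact hne rfl

/-!
Colour a vertex `v` of `G` by its acyclic colour `c v`, by the colour under `φ` of its copy in
`G'`, and, for each other acyclic colour `j`, by two pieces of data about `v` in the forest spanned
by the colour classes `c v` and `j`, rooted in each component: the `φ`-colour of the division
vertex on the edge from `v` to its parent (if any), and the depth of `v` modulo `3`. Along a forest
edge the depth changes by one, so the depths modulo `3` of its ends tell which end is the parent.
Hence on a repetitive path of `G` two edges in corresponding positions are oriented alike in their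
common forest, and the parent data carry the colour of one division vertex over to the other.
Interleaving the path with its division vertices gives a repetitive path of `G'` once it is
prolonged by one edge: if the middle edge `v_{s-1} v_s` goes from `v_s` up to its parent, then
`v_0` has a parent edge of the same colour, and it is not `v_0 v_1` by the depth count (in the
other case, reverse the path). The palette has `l · k · (3(k+1))^(l-1)` colours.
-/

namespace SimpleGraph

variable {V : Type*} {F : SimpleGraph V}

noncomputable def root (F : SimpleGraph V) (v : V) : V := (F.connectedComponentMk v).out

lemma root_eq_of_reachable {u w : V} (h : F.Reachable u w) : F.root u = F.root w :=
  congrArg Quot.out (ConnectedComponent.eq.mpr h)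

lemma reachable_root (F : SimpleGraph V) (v : V) : F.Reachable v (F.root v) :=
  (ConnectedComponent.eq.mp (Quot.out_eq (F.connectedComponentMk v))).symm

open Classical in
noncomputable def pathToRoot (F : SimpleGraph V) (v : V) : F.Walk v (F.root v) :=
  (F.reachable_root v).some.bypass

lemma isPath_pathToRoot (F : SimpleGraph V) (v : V) : (F.pathToRoot v).IsPath := by
  classical exact Walk.bypass_isPath _

/-- A root is its own parent, so `F.Adj v (F.parent v)` says that `v` is not a root. -/
noncomputable def parent (F : SimpleGraph V) (v : V) : V := (F.pathToRoot v).snd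

noncomputable def depth (F : SimpleGraph V) (v : V) : ℕ := (F.pathToRoot v).length

lemma IsAcyclic.eq_pathToRoot (hF : F.IsAcyclic) {v : V} (p : F.Walk v (F.root v))
    (hp : p.IsPath) : p = F.pathToRoot v :=
  congrArg Subtype.val ((hF.subsingleton_path _ _).elim ⟨p, hp⟩ ⟨_, F.isPath_pathToRoot v⟩)

lemma IsAcyclic.depth_parent_add_one (hF : F.IsAcyclic) {u : V} (h : F.Adj u (F.parent u)) :
    F.depth (F.parent u) + 1 = F.depth u := by
  set p := F.pathToRoot u
  have hnil : ¬ p.Nil := fun hn => h.ne <|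
    ((p.getVert_of_length_le (by simp [Walk.length_eq_zero_iff.mpr hn])).trans hn.eq.symm).symm
  have hp := hF.eq_pathToRoot (p.tail.copy rfl (root_eq_of_reachable h.reachable))
    (by simpa using (F.isPath_pathToRoot u).tail)
  calc F.depth (F.parent u) + 1 = p.tail.length + 1 := by
        rw [depth, show F.parent u = p.snd from rfl, ← hp, Walk.length_copy]
    _ = F.depth u := p.length_tail_add_one hnil

lemma IsAcyclic.parent_eq_or_parent_eq (hF : F.IsAcyclic) {u w : V} (h : F.Adj u w) :
    F.parent u = w ∨ F.parent w = u := by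
  by_cases hw : w ∈ (F.pathToRoot u).support
  · exact Or.inl (hF.eq_snd_of_adj_start (F.isPath_pathToRoot u) h hw).symm
  · right
    have hp : (Walk.cons h.symm (F.pathToRoot u)).IsPath :=
      (F.isPath_pathToRoot u).cons hw
    rw [parent, ← hF.eq_pathToRoot ((Walk.cons h.symm (F.pathToRoot u)).copy rfl
      (root_eq_of_reachable h.reachable)) (by simpa using hp)]
    simp

lemma IsAcyclic.parent_eq_of_depth_modEq (hF : F.IsAcyclic) {x₁ x₂ y₁ y₂ : V}
    (hx : F.Adj x₁ x₂) (hy : F.Adj y₁ y₂) (hpx : F.parent x₁ = x₂)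
    (h₁ : F.depth x₁ ≡ F.depth y₁ [MOD 3]) (h₂ : F.depth x₂ ≡ F.depth y₂ [MOD 3]) :
    F.parent y₁ = y₂ := by
  refine (hF.parent_eq_or_parent_eq hy).resolve_right fun hpy => ?_
  have dx := hF.depth_parent_add_one (hpx ▸ hx)
  have dy := hF.depth_parent_add_one (hpy ▸ hy.symm)
  rw [hpx] at dx
  rw [hpy] at dy
  unfold Nat.ModEq at h₁ h₂
  omega

open Classical in
noncomputable def parentLabel {β : Type*} (F : SimpleGraph V) (m : V → V → β) (v : V) :
    Option β :=
  if F.Adj v (F.parent v) then some (m v (F.parent v)) else none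

variable {β : Type*} {m : V → V → β}

lemma parentLabel_of_parent_eq {u w : V} (h : F.Adj u w) (hp : F.parent u = w) :
    F.parentLabel m u = some (m u w) := by
  subst hp
  simp [parentLabel, h]

lemma adj_parent_of_parentLabel_eq_some {u : V} {b : β} (h : F.parentLabel m u = some b) :
    F.Adj u (F.parent u) ∧ m u (F.parent u) = b := by
  by_cases hu : F.Adj u (F.parent u)
  · simp_all [parentLabel]
  · simp [parentLabel, hu] at h

lemma IsAcyclic.label_eq_of_parentLabel_eq (hF : F.IsAcyclic)
    (hm : ∀ u w, F.Adj u w → m u w = m w u) {x₁ x₂ y₁ y₂ : V}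
    (hx : F.Adj x₁ x₂) (hy : F.Adj y₁ y₂)
    (hl₁ : F.parentLabel m x₁ = F.parentLabel m y₁)
    (hl₂ : F.parentLabel m x₂ = F.parentLabel m y₂)
    (hd₁ : F.depth x₁ ≡ F.depth y₁ [MOD 3]) (hd₂ : F.depth x₂ ≡ F.depth y₂ [MOD 3]) :
    m x₁ x₂ = m y₁ y₂ := by
  rcases hF.parent_eq_or_parent_eq hx with hpx | hpx
  · have hpy := hF.parent_eq_of_depth_modEq hx hy hpx hd₁ hd₂
    rw [parentLabel_of_parent_eq hx hpx, parentLabel_of_parent_eq hy hpy] at hl₁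
    exact Option.some_inj.mp hl₁
  · have hpy := hF.parent_eq_of_depth_modEq hx.symm hy.symm hpx hd₂ hd₁
    rw [parentLabel_of_parent_eq hx.symm hpx, parentLabel_of_parent_eq hy.symm hpy] at hl₂
    rw [hm _ _ hx, hm _ _ hy]
    exact Option.some_inj.mp hl₂

def bichromatic {α : Type*} (G : SimpleGraph V) (c : V → α) (p q : α) : SimpleGraph V where
  Adj u w := G.Adj u w ∧ s(c u, c w) = s(p, q)
  symm := ⟨fun _ _ h => ⟨h.1.symm, by rw [Sym2.eq_swap]; exact h.2⟩⟩
  loopless := ⟨fun _ h => h.1.ne rfl⟩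

variable {α : Type*} {G : SimpleGraph V} {c : V → α}

lemma bichromatic_comm (p q : α) : G.bichromatic c p q = G.bichromatic c q p := by
  ext u w
  simp [bichromatic, Sym2.eq_swap]

lemma bichromatic_le (p q : α) : G.bichromatic c p q ≤ G := fun _ _ h => h.1

end SimpleGraph

section Colorings

variable {V α β : Type*} {G : SimpleGraph V}

lemma AcyclicColoring.isAcyclic_bichromatic {c : V → α} (hc : AcyclicColoring G c) (p q : α) :
    (G.bichromatic c p q).IsAcyclic := by
  intro v cyc hcyc
  have hcol : ∀ x ∈ cyc.support, c x = p ∨ c x = q := fun x hx => by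
    obtain ⟨w, -, hxw⟩ := adj_of_mem_walk_support cyc hcyc.not_nil hx
    have : c x ∈ s(p, q) := hxw.2 ▸ Sym2.mem_mk_left (c x) (c w)
    simpa using this
  obtain ⟨x, hx, y, hy, z, hz, hxy, hxz, hyz⟩ :=
    hc.2 v (cyc.mapLe (bichromatic_le p q)) (hcyc.mapLe _)
  rw [Walk.support_mapLe_eq_support] at hx hy hz
  rcases hcol x hx with h | h <;> rcases hcol y hy with h' | h' <;>
    rcases hcol z hz with h'' | h'' <;> simp_all

lemma AcyclicColoring.comp_injective {c : V → α} (hc : AcyclicColoring G c) {g : α → β}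
    (hg : g.Injective) : AcyclicColoring G (g ∘ c) := by
  refine ⟨fun u w h => hg.ne (hc.1 u w h), fun u cyc hcyc => ?_⟩
  obtain ⟨x, hx, y, hy, z, hz, hxy, hxz, hyz⟩ := hc.2 u cyc hcyc
  exact ⟨x, hx, y, hy, z, hz, hg.ne hxy, hg.ne hxz, hg.ne hyz⟩

lemma acyclicColoring_of_injective {c : V → α} (hc : c.Injective) : AcyclicColoring G c := by
  refine ⟨fun u w h => hc.ne h.ne, fun u cyc hcyc => ?_⟩
  have h3 := hcyc.three_le_length
  have hne : ∀ i j, i < 3 → j < 3 → i ≠ j → c (cyc.getVert i) ≠ c (cyc.getVert j) :=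
    fun i j hi hj hij => hc.ne fun he => hij (hcyc.getVert_injOn' (by simp; omega)
      (by simp; omega) he)
  exact ⟨_, cyc.getVert_mem_support 0, _, cyc.getVert_mem_support 1, _,
    cyc.getVert_mem_support 2, hne 0 1 (by omega) (by omega) (by omega),
    hne 0 2 (by omega) (by omega) (by omega), hne 1 2 (by omega) (by omega) (by omega)⟩

structure IsRepetitivePath (G : SimpleGraph V) (f : V → α) (s : ℕ) (v : ℕ → V) : Prop where
  ne : ∀ i < 2 * s, ∀ j < 2 * s, i ≠ j → v i ≠ v j
  adj : ∀ i, i + 1 < 2 * s → G.Adj (v i) (v (i + 1))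
  rep : ∀ i < s, f (v i) = f (v (i + s))

lemma nonRepColoring_iff {f : V → α} :
    NonRepColoring G f ↔ ∀ s, 0 < s → ∀ v, ¬ IsRepetitivePath G f s v :=
  ⟨fun hf s hs v hv => hf s hs v hv.ne hv.adj hv.rep,
    fun h s hs v hne hadj hrep => h s hs v ⟨hne, hadj, hrep⟩⟩

lemma IsRepetitivePath.reverse {f : V → α} {s : ℕ} {v : ℕ → V}
    (hv : IsRepetitivePath G f s v) : IsRepetitivePath G f s (fun i => v (2 * s - 1 - i)) where
  ne i hi j hj hij := hv.ne _ (by omega) _ (by omega) (by omega)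
  adj i hi := by
    have h := hv.adj (2 * s - 2 - i) (by omega)
    rw [show 2 * s - 2 - i + 1 = 2 * s - 1 - i by omega] at h
    rw [show 2 * s - 1 - (i + 1) = 2 * s - 2 - i by omega]
    exact h.symm
  rep i hi := by
    have h := hv.rep (s - 1 - i) (by omega)
    rw [show s - 1 - i + s = 2 * s - 1 - i by omega] at h
    rw [show 2 * s - 1 - (i + s) = s - 1 - i by omega]
    exact h.symm

lemma NonRepColoring.comp_injective {f : V → α} (hf : NonRepColoring G f) {g : α → β}
    (hg : g.Injective) : NonRepColoring G (g ∘ f) :=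
  fun s hs v hne hadj hrep => hf s hs v hne hadj fun i hi => hg (hrep i hi)

lemma nonRepColoring_of_injective {f : V → α} (hf : f.Injective) : NonRepColoring G f :=
  fun s hs v hne _ hrep =>
    hne 0 (by omega) s (by omega) (by omega) (hf (by simpa using hrep 0 hs))

lemma nonRepColoring_of_forall_not_adj (hG : ∀ u w, ¬ G.Adj u w) (f : V → α) :
    NonRepColoring G f :=
  fun s hs v _ hadj _ => hG _ _ (hadj 0 (by omega))

end Colorings

abbrev Palette (ι α β : Type*) : Type _ := Σ i : ι, α × ({j : ι // j ≠ i} → β)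

namespace Palette

variable {ι α β : Type*}

def ofFun (i : ι) (a : α) (g : ι → β) : Palette ι α β := ⟨i, a, fun j => g j⟩

lemma eq_of_ofFun_eq {i i' : ι} {a a' : α} {g g' : ι → β} (h : ofFun i a g = ofFun i' a' g') :
    i = i' ∧ a = a' ∧ ∀ j ≠ i, g j = g' j := by
  obtain ⟨rfl, hag⟩ := Sigma.mk.inj_iff.mp h
  obtain ⟨rfl, hg⟩ := Prod.mk.inj (eq_of_heq hag)
  exact ⟨rfl, rfl, fun j hj => congrFun hg ⟨j, hj⟩⟩

end Palette

lemma index_eq_of_sym2_eq {V : Type*} {u : ℕ → V} {n : ℕ}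
    (hinj : ∀ i < n, ∀ j < n, u (i + 1) = u (j + 1) → i = j) (h02 : u 0 ≠ u 2)
    {t t' : ℕ} (ht : t < n) (ht' : t' < n) (he : s(u t, u (t + 1)) = s(u t', u (t' + 1))) :
    t = t' := by
  rcases Sym2.eq_iff.mp he with ⟨-, h⟩ | ⟨h₁, h₂⟩
  · exact hinj t ht t' ht' h
  · rcases t with _ | t <;> rcases t' with _ | t'
    · rfl
    · obtain rfl := hinj 0 (by omega) t' (by omega) h₂
      exact absurd h₁ h02
    · obtain rfl := hinj t (by omega) 0 (by omega) h₁
      exact absurd h₂.symm h02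
    · have := hinj t (by omega) (t' + 1) (by omega) h₁
      have := hinj (t + 1) (by omega) t' (by omega) h₂
      omega

namespace SubdivisionWitness

variable {V W : Type*} {G : SimpleGraph V} {G' : SimpleGraph W} (S : SubdivisionWitness G G')

def IsOneSubdivision : Prop := ∀ ⦃a b : V⦄ (h : G.Adj a b), (S.path h).length = 2

open Classical in
noncomputable def midpoint (a b : V) : W := if h : G.Adj a b then (S.path h).snd else S.emb a

/-- The division vertex of `u 0 u 1`, then `u 1`, the division vertex of `u 1 u 2`, then `u 2`, …
(the start `u 0` itself is left out). -/
noncomputable def subdivide (u : ℕ → V) (m : ℕ) : W :=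
  if m % 2 = 0 then S.midpoint (u (m / 2)) (u (m / 2 + 1)) else S.emb (u (m / 2 + 1))

variable {S} {a b : V}

lemma midpoint_of_adj (h : G.Adj a b) : S.midpoint a b = (S.path h).snd := dif_pos h

lemma midpoint_mem_support (h : G.Adj a b) : S.midpoint a b ∈ (S.path h).support := by
  rw [midpoint_of_adj h]
  exact Walk.getVert_mem_support _ 1

lemma adj_emb_midpoint (h : G.Adj a b) : G'.Adj (S.emb a) (S.midpoint a b) := by
  rw [midpoint_of_adj h]
  exact Walk.adj_snd fun hn => h.ne (S.emb.injective hn.eq)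

lemma midpoint_comm (hS : S.IsOneSubdivision)
    (h : G.Adj a b) : S.midpoint b a = S.midpoint a b := by
  rw [midpoint_of_adj h.symm, midpoint_of_adj h, S.path_symm h, Walk.snd_reverse,
    Walk.penultimate, hS h]

lemma adj_midpoint_emb (hS : S.IsOneSubdivision)
    (h : G.Adj a b) : G'.Adj (S.midpoint a b) (S.emb b) := by
  rw [← midpoint_comm hS h]
  exact (adj_emb_midpoint h.symm).symm

lemma emb_ne_midpoint (hS : S.IsOneSubdivision)
    (h : G.Adj a b) (x : V) : S.emb x ≠ S.midpoint a b := by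
  intro hx
  rcases S.internal_new h x (hx ▸ midpoint_mem_support h) with rfl | rfl
  · exact (adj_emb_midpoint h).ne hx
  · exact (adj_midpoint_emb hS h).ne hx.symm

lemma sym2_eq_of_midpoint_eq (hS : S.IsOneSubdivision) {a' b' : V}
    (h : G.Adj a b) (h' : G.Adj a' b')
    (he : S.midpoint a b = S.midpoint a' b') : s(a, b) = s(a', b') := by
  by_contra hne
  obtain ⟨x, hx⟩ := S.internally_disjoint h h' hne _ (midpoint_mem_support h)
    (he ▸ midpoint_mem_support h')
  exact emb_ne_midpoint hS h x hx

lemma subdivide_two_mul (u : ℕ → V) (t : ℕ) :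
    S.subdivide u (2 * t) = S.midpoint (u t) (u (t + 1)) := by
  simp [subdivide]

lemma subdivide_two_mul_add_one (u : ℕ → V) (t : ℕ) :
    S.subdivide u (2 * t + 1) = S.emb (u (t + 1)) := by
  simp [subdivide, Nat.add_mod, Nat.add_div]

lemma isRepetitivePath_subdivide (hS : S.IsOneSubdivision) {κ : Type*} {φ : W → κ}
    {s : ℕ} {u : ℕ → V} (hadj : ∀ i < 2 * s, G.Adj (u i) (u (i + 1)))
    (hinj : ∀ i < 2 * s, ∀ j < 2 * s, u (i + 1) = u (j + 1) → i = j) (h02 : u 0 ≠ u 2)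
    (hvert : ∀ t < s, φ (S.emb (u (t + 1))) = φ (S.emb (u (t + s + 1))))
    (hedge : ∀ t < s,
      φ (S.midpoint (u t) (u (t + 1))) = φ (S.midpoint (u (t + s)) (u (t + s + 1)))) :
    IsRepetitivePath G' φ (2 * s) (S.subdivide u) where
  ne i hi j hj hij := by
    obtain ⟨t, rfl | rfl⟩ := Nat.even_or_odd' i <;>
      obtain ⟨t', rfl | rfl⟩ := Nat.even_or_odd' j <;>
      simp only [subdivide_two_mul, subdivide_two_mul_add_one]
    · intro he
      have := index_eq_of_sym2_eq hinj h02 (by omega) (by omega)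
        (sym2_eq_of_midpoint_eq hS (hadj t (by omega)) (hadj t' (by omega)) he)
      omega
    · exact (emb_ne_midpoint hS (hadj t (by omega)) _).symm
    · exact emb_ne_midpoint hS (hadj t' (by omega)) _
    · intro he
      have := hinj t (by omega) t' (by omega) (S.emb.injective he)
      omega
  adj i hi := by
    obtain ⟨t, rfl | rfl⟩ := Nat.even_or_odd' i
    · rw [subdivide_two_mul, subdivide_two_mul_add_one]
      exact adj_midpoint_emb hS (hadj t (by omega))
    · rw [subdivide_two_mul_add_one, show 2 * t + 1 + 1 = 2 * (t + 1) by omega,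
        subdivide_two_mul]
      exact adj_emb_midpoint (hadj (t + 1) (by omega))
  rep i hi := by
    obtain ⟨t, rfl | rfl⟩ := Nat.even_or_odd' i
    · rw [show 2 * t + 2 * s = 2 * (t + s) by omega, subdivide_two_mul, subdivide_two_mul]
      exact hedge t (by omega)
    · rw [show 2 * t + 1 + 2 * s = 2 * (t + s) + 1 by omega, subdivide_two_mul_add_one,
        subdivide_two_mul_add_one]
      exact hvert t (by omega)

end SubdivisionWitness

section PullbackColoring

open SubdivisionWitness

variable {V W ι κ : Type*} {G : SimpleGraph V} {G' : SimpleGraph W}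

noncomputable def pullbackColoring (S : SubdivisionWitness G G') (φ : W → κ) (c : V → ι)
    (v : V) : Palette ι κ (Option κ × ZMod 3) :=
  Palette.ofFun (c v) (φ (S.emb v)) fun j =>
    ((G.bichromatic c (c v) j).parentLabel (fun a b => φ (S.midpoint a b)) v,
      ((G.bichromatic c (c v) j).depth v : ZMod 3))

variable {S : SubdivisionWitness G G'} {φ : W → κ} {c : V → ι}

lemma pullbackColoring_eq {u w : V} (h : pullbackColoring S φ c u = pullbackColoring S φ c w) :
    c u = c w ∧ φ (S.emb u) = φ (S.emb w) ∧ ∀ j ≠ c u,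
      (G.bichromatic c (c u) j).parentLabel (fun a b => φ (S.midpoint a b)) u =
        (G.bichromatic c (c u) j).parentLabel (fun a b => φ (S.midpoint a b)) w ∧
      (G.bichromatic c (c u) j).depth u ≡ (G.bichromatic c (c u) j).depth w [MOD 3] := by
  obtain ⟨hc, hφ, hg⟩ := Palette.eq_of_ofFun_eq h
  refine ⟨hc, hφ, fun j hj => ?_⟩
  have := hg j hj
  rw [← hc] at this
  simpa [ZMod.natCast_eq_natCast_iff] using this

lemma midpoint_color_eq (hS : S.IsOneSubdivision)
    (hc : AcyclicColoring G c) {x₁ x₂ y₁ y₂ : V} (hx : G.Adj x₁ x₂) (hy : G.Adj y₁ y₂)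
    (h₁ : pullbackColoring S φ c x₁ = pullbackColoring S φ c y₁)
    (h₂ : pullbackColoring S φ c x₂ = pullbackColoring S φ c y₂) :
    φ (S.midpoint x₁ x₂) = φ (S.midpoint y₁ y₂) := by
  obtain ⟨hc₁, -, hr₁⟩ := pullbackColoring_eq h₁
  obtain ⟨hc₂, -, hr₂⟩ := pullbackColoring_eq h₂
  have hne : c x₂ ≠ c x₁ := (hc.1 _ _ hx).symm
  obtain ⟨hl₁, hd₁⟩ := hr₁ (c x₂) hne
  obtain ⟨hl₂, hd₂⟩ := hr₂ (c x₁) hne.symm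
  rw [bichromatic_comm] at hl₂ hd₂
  exact (hc.isAcyclic_bichromatic _ _).label_eq_of_parentLabel_eq
    (fun u w h => congrArg φ (midpoint_comm hS h.1).symm) ⟨hx, rfl⟩ ⟨hy, by rw [hc₁, hc₂]⟩
    hl₁ hl₂ hd₁ hd₂

lemma exists_parent_edge_of_parent_eq (hc : AcyclicColoring G c) {r : ℕ} (hr : 1 ≤ r)
    {v : ℕ → V} (hv : IsRepetitivePath G (pullbackColoring S φ c) (r + 1) v)
    (hpar : (G.bichromatic c (c (v 0)) (c (v r))).parent (v (r + 1)) = v r) :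
    ∃ y, G.Adj (v 0) y ∧ y ≠ v 1 ∧ φ (S.midpoint (v 0) y) = φ (S.midpoint (v (r + 1)) (v r)) := by
  set F := G.bichromatic c (c (v 0)) (c (v r)) with hFdef
  obtain ⟨hc₀, -, hrec₀⟩ := pullbackColoring_eq (hv.rep 0 (by omega))
  simp only [zero_add] at hc₀ hrec₀
  have hmid : G.Adj (v r) (v (r + 1)) := hv.adj r (by omega)
  have hne : c (v r) ≠ c (v 0) := by rw [hc₀]; exact hc.1 _ _ hmid
  have hFmid : F.Adj (v (r + 1)) (v r) := ⟨hmid.symm, by rw [← hc₀]⟩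
  obtain ⟨hl₀, hd₀⟩ := hrec₀ (c (v r)) hne
  rw [← hFdef, parentLabel_of_parent_eq hFmid hpar] at hl₀
  obtain ⟨hFy, hy⟩ := adj_parent_of_parentLabel_eq_some hl₀
  refine ⟨F.parent (v 0), hFy.1, fun h => ?_, hy⟩
  have hF₀₁ : F.Adj (v 0) (v 1) := h ▸ hFy
  have hc₁ : c (v 1) = c (v r) := Sym2.congr_right.mp hF₀₁.2
  obtain ⟨hc₁', -, hrec₁⟩ := pullbackColoring_eq (hv.rep 1 (by omega))
  rw [show 1 + (r + 1) = r + 2 by omega] at hc₁' hrec₁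
  obtain ⟨-, hd₁⟩ := hrec₁ (c (v 0)) (by rw [hc₁]; exact hne.symm)
  rw [hc₁, bichromatic_comm, ← hFdef] at hd₁
  have hFs : F.Adj (v (r + 1)) (v (r + 2)) :=
    ⟨hv.adj (r + 1) (by omega), by rw [← hc₀, ← hc₁', hc₁]⟩
  have hpar' := (hc.isAcyclic_bichromatic _ _).parent_eq_of_depth_modEq hF₀₁ hFs h hd₀ hd₁
  exact hv.ne r (by omega) (r + 2) (by omega) (by omega) (hpar.symm.trans hpar')

lemma not_isRepetitivePath_of_parent_eq (hS : S.IsOneSubdivision) (hφ : NonRepColoring G' φ)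
    (hc : AcyclicColoring G c) {r : ℕ} (hr : 1 ≤ r) {v : ℕ → V}
    (hpar : (G.bichromatic c (c (v 0)) (c (v r))).parent (v (r + 1)) = v r) :
    ¬ IsRepetitivePath G (pullbackColoring S φ c) (r + 1) v := by
  intro hv
  obtain ⟨y, hy, hy₁, hyφ⟩ := exists_parent_edge_of_parent_eq hc hr hv hpar
  refine nonRepColoring_iff.mp hφ (2 * (r + 1)) (by omega) _
    (isRepetitivePath_subdivide (u := fun | 0 => y | i + 1 => v i) hS ?_ ?_ hy₁ ?_ ?_)
  · rintro (_ | i) hi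
    · exact hy.symm
    · exact hv.adj i (by omega)
  · intro i hi j hj hij
    by_contra hne
    exact hv.ne i hi j hj hne hij
  · exact fun t ht => (pullbackColoring_eq (hv.rep t ht)).2.1
  · rintro (_ | t) ht
    · show φ (S.midpoint y (v 0)) = φ (S.midpoint (v (0 + r)) (v (0 + r + 1)))
      rw [zero_add, midpoint_comm hS hy, ← midpoint_comm hS (hv.adj r (by omega))]
      exact hyφ
    · show φ (S.midpoint (v t) (v (t + 1))) = φ (S.midpoint (v (t + 1 + r)) (v (t + 1 + r + 1)))
      have h₂ := hv.rep (t + 1) (by omega)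
      rw [show t + 1 + (r + 1) = t + r + 1 + 1 by omega] at h₂
      rw [show t + 1 + r = t + r + 1 by omega]
      exact midpoint_color_eq hS hc (hv.adj t (by omega)) (hv.adj (t + r + 1) (by omega))
        (hv.rep t (by omega)) h₂

theorem nonRepColoring_pullbackColoring (hS : S.IsOneSubdivision) (hφ : NonRepColoring G' φ)
    (hc : AcyclicColoring G c) :
    NonRepColoring G (pullbackColoring S φ c) := by
  refine nonRepColoring_iff.mpr fun s hs v hv => ?_
  obtain ⟨r, rfl⟩ : ∃ r, s = r + 1 := ⟨s - 1, by omega⟩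
  have hc₀ : c (v 0) = c (v (r + 1)) := by simpa using (pullbackColoring_eq (hv.rep 0 hs)).1
  have hmid : G.Adj (v r) (v (r + 1)) := hv.adj r (by omega)
  rcases Nat.eq_zero_or_pos r with rfl | hr
  · exact hc.1 _ _ hmid hc₀
  have hFmid : (G.bichromatic c (c (v 0)) (c (v r))).Adj (v (r + 1)) (v r) :=
    ⟨hmid.symm, by rw [← hc₀]⟩
  rcases (hc.isAcyclic_bichromatic _ _).parent_eq_or_parent_eq hFmid with h | h
  · exact not_isRepetitivePath_of_parent_eq hS hφ hc hr h hv
  · refine not_isRepetitivePath_of_parent_eq hS hφ hc hr ?_ hv.reverse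
    have hc₁ : c (v r) = c (v (2 * r + 1)) := by
      have := (pullbackColoring_eq (hv.rep r (by omega))).1
      rwa [show r + (r + 1) = 2 * r + 1 by omega] at this
    simp only [show 2 * (r + 1) - 1 - 0 = 2 * r + 1 by omega,
      show 2 * (r + 1) - 1 - r = r + 1 by omega, show 2 * (r + 1) - 1 - (r + 1) = r by omega]
    rwa [← hc₀, ← hc₁, bichromatic_comm]

end PullbackColoring

lemma mem_of_sInf_le {s : Set ℕ} (hs : s.Nonempty) (hup : ∀ m n, m ≤ n → m ∈ s → n ∈ s)
    {k : ℕ} (hk : sInf s ≤ k) : k ∈ s :=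
  hup _ _ hk (Nat.sInf_mem hs)

section ColoringNumbers

variable {V : Type*} {G : SimpleGraph V}

lemma exists_nonRepColoring_of_piNum_le [Fintype V] {k : ℕ} (hk : piNum G ≤ k) :
    ∃ f : V → Fin k, NonRepColoring G f :=
  mem_of_sInf_le (s := {n | ∃ f : V → Fin n, NonRepColoring G f})
    ⟨_, _, nonRepColoring_of_injective (Fintype.equivFin V).injective⟩
    (fun _ _ hmn ⟨_, hf⟩ => ⟨_, hf.comp_injective (Fin.castLE_injective hmn)⟩) hk

lemma exists_acyclicColoring_of_chiA_le [Fintype V] {l : ℕ} (hl : chiA G ≤ l) :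
    ∃ c : V → Fin l, AcyclicColoring G c :=
  mem_of_sInf_le (s := {n | ∃ c : V → Fin n, AcyclicColoring G c})
    ⟨_, _, acyclicColoring_of_injective (Fintype.equivFin V).injective⟩
    (fun _ _ hmn ⟨_, hc⟩ => ⟨_, hc.comp_injective (Fin.castLE_injective hmn)⟩) hl

lemma piNum_le_card {α : Type*} [Fintype α] {f : V → α} (hf : NonRepColoring G f) :
    piNum G ≤ Fintype.card α :=
  Nat.sInf_le ⟨_, hf.comp_injective (Fintype.equivFin α).injective⟩

end ColoringNumbers

lemma palette_size_le_bound (k l : ℕ) (hl : l ≠ 1) :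
    l * (k * ((k + 1) * 3) ^ (l - 1)) ≤ l * (k * (k + 1) * (2 * k + 1)) ^ (l - 1) := by
  rcases Nat.eq_zero_or_pos l with rfl | hl₀
  · simp
  rcases Nat.eq_zero_or_pos k with rfl | hk₀
  · simp
  rw [mul_assoc k, mul_pow k]
  gcongr
  · exact Nat.le_self_pow (by omega) k
  · omega

/-- Let `G'` be the `1`-subdivision of `G`. If `π(G') ≤ k` and `χₐ(G) ≤ ℓ`,
then `π(G) ≤ ℓ·(k(k+1)(2k+1))^{ℓ−1}`. -/
theorem stmt_14 {V W : Type*} [Fintype V] [Fintype W]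
    (G : SimpleGraph V) (G' : SimpleGraph W) (hsub : IsExactSubdivision 1 G G')
    (k l : ℕ) (hk : piNum G' ≤ k) (hl : chiA G ≤ l) :
    piNum G ≤ l * (k * (k + 1) * (2 * k + 1)) ^ (l - 1) := by
  obtain ⟨S, hS⟩ := hsub
  obtain ⟨φ, hφ⟩ := exists_nonRepColoring_of_piNum_le hk
  obtain ⟨c, hc⟩ := exists_acyclicColoring_of_chiA_le hl
  rcases eq_or_ne l 1 with rfl | hl₁
  · have hG : ∀ u w, ¬ G.Adj u w := fun u w h => hc.1 u w h (Subsingleton.elim _ _)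
    simpa using piNum_le_card (nonRepColoring_of_forall_not_adj hG fun _ => ())
  calc piNum G ≤ Fintype.card (Palette (Fin l) (Fin k) (Option (Fin k) × ZMod 3)) :=
        piNum_le_card (nonRepColoring_pullbackColoring hS hφ hc)
    _ = l * (k * ((k + 1) * 3) ^ (l - 1)) := by simp
    _ ≤ l * (k * (k + 1) * (2 * k + 1)) ^ (l - 1) := palette_size_le_bound k l hl₁
end

section
/- If the 1-subdivision G' of a graph G admits a non-repetitive colouring with k colours, then χ_a(G) ≤ k·2^{2k²}. -/
open SimpleGraph MeasureTheory Filter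

/-! Fix a linear order on `V`. Colour a vertex `v` of `G` by its colour in `G'` together with
the sets of colour pairs `(f w, f m)` over the subdivided edges `v – m – w` of `G'` going up,
resp. down, from `v`; there are `k · 2^{k²} · 2^{k²}` such colours. If adjacent `u < v` got the
same colour, the pair of `uv` in the upper set of `u` reappears in the upper set of `v` on some
edge `v – m' – w`, and `u, m, v, m'` is a repetitive path of `G'`. In a bichromatic cycle the
colours alternate; the same transfer argument then forces consecutive division vertices of the
cycle to share their colour (else a repetitive path on 4 or 8 vertices appears), and four
consecutive subdivided edges of the cycle form a repetitive path on 8 vertices. -/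

theorem NonRepColoring.map_ne_map_of_isChain {V α : Type*} {G : SimpleGraph V} {f : V → α}
    (hf : NonRepColoring G f) {l₁ l₂ : List V} (h₁ : l₁ ≠ [])
    (hnd : (l₁ ++ l₂).Nodup) (hc : (l₁ ++ l₂).IsChain G.Adj) : l₁.map f ≠ l₂.map f := by
  intro heq
  have hlen : l₂.length = l₁.length := by simpa using congrArg List.length heq.symm
  obtain ⟨x, -⟩ := List.exists_mem_of_ne_nil _ h₁
  have hl : (l₁ ++ l₂).length = 2 * l₁.length := by rw [List.length_append, hlen]; ring
  have hget : ∀ i (hi : i < 2 * l₁.length), (l₁ ++ l₂).getD i x = (l₁ ++ l₂)[i] := fun i hi =>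
    List.getD_eq_getElem _ _ (by omega)
  refine hf l₁.length (List.length_pos_of_ne_nil h₁) (fun i => (l₁ ++ l₂).getD i x) ?_ ?_ ?_
  · intro i hi j hj hij
    rw [hget i hi, hget j hj]
    exact fun h => hij (hnd.getElem_inj_iff.mp h)
  · intro i hi
    rw [hget i (by omega), hget (i + 1) hi]
    exact hc.getElem i (by omega)
  · intro i hi
    have := congrArg (·[i]?) heq
    rw [hget i (by omega), hget (i + l₁.length) (by omega), List.getElem_append_left hi,
      List.getElem_append_right (by omega)]
    simpa [List.getElem?_map, List.getElem?_eq_getElem hi,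
      List.getElem?_eq_getElem (show i < l₂.length by omega)] using this

theorem AcyclicColoring.comp_injective_s15 {V α β : Type*} {G : SimpleGraph V} {φ : V → α}
    (hφ : AcyclicColoring G φ) {e : α → β} (he : Function.Injective e) :
    AcyclicColoring G (e ∘ φ) := by
  refine ⟨fun u w h => he.ne (hφ.1 u w h), fun u c hc => ?_⟩
  obtain ⟨x, hx, y, hy, z, hz, hxy, hxz, hyz⟩ := hφ.2 u c hc
  exact ⟨x, hx, y, hy, z, hz, he.ne hxy, he.ne hxz, he.ne hyz⟩

theorem chiA_le_card {V α : Type*} [Fintype α] {G : SimpleGraph V} {φ : V → α}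
    (hφ : AcyclicColoring G φ) : chiA G ≤ Fintype.card α :=
  Nat.sInf_le ⟨_, hφ.comp_injective_s15 (Fintype.equivFin α).injective⟩

theorem acyclicColoring_of_forall_alternating_path {V α : Type*} {G : SimpleGraph V}
    {φ : V → α} (hproper : ∀ u w, G.Adj u w → φ u ≠ φ w)
    (halt : ∀ ⦃v₀ v₁ v₂ v₃ v₄ : V⦄, G.Adj v₀ v₁ → G.Adj v₁ v₂ → G.Adj v₂ v₃ → G.Adj v₃ v₄ →
      v₀ ≠ v₂ → v₀ ≠ v₃ → v₁ ≠ v₃ → v₂ ≠ v₄ → φ v₀ = φ v₂ → φ v₁ = φ v₃ → φ v₂ ≠ φ v₄) :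
    AcyclicColoring G φ := by
  refine ⟨hproper, fun u c hc => ?_⟩
  by_contra! hno
  have hlen := hc.three_le_length
  set v := c.getVert
  have hadj : ∀ t, t < c.length → G.Adj (v t) (v (t + 1)) := fun t ht => c.adj_getVert_succ ht
  have halternate : ∀ t, t + 2 ≤ c.length → φ (v t) = φ (v (t + 2)) := fun t ht => by
    by_contra hne
    exact hproper _ _ (hadj (t + 1) (by omega)) (hno _ (c.getVert_mem_support t) _
      (c.getVert_mem_support (t + 1)) _ (c.getVert_mem_support (t + 2))
      (hproper _ _ (hadj t (by omega))) hne)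
  have hne : ∀ i j, i < j → j < c.length → v i ≠ v j := fun i j hij hj =>
    hc.getVert_injOn'.ne (by simp only [Set.mem_ofPred_eq]; omega)
      (by simp only [Set.mem_ofPred_eq]; omega) hij.ne
  rcases hlen.eq_or_lt with h3 | h4
  · have h30 : v 3 = v 0 := by
      simp only [v, h3, c.getVert_length, c.getVert_zero]
    exact hproper _ _ (hadj 0 (by omega)) (by rw [halternate 1 (by omega), h30])
  · exact halt (hadj 0 (by omega)) (hadj 1 (by omega)) (hadj 2 (by omega)) (hadj 3 (by omega))
      (hne 0 2 (by omega) (by omega)) (hne 0 3 (by omega) (by omega))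
      (hne 1 3 (by omega) (by omega))
      (hc.getVert_sub_one_ne_getVert_add_one (i := 3) (by omega))
      (halternate 0 (by omega)) (halternate 1 (by omega)) (halternate 2 (by omega))

namespace SubdivisionWitness

section

variable {V W : Type*} {G : SimpleGraph V} {G' : SimpleGraph W} (S : SubdivisionWitness G G')

def mid {a b : V} (h : G.Adj a b) : W :=
  (S.path h).getVert 1

variable {S} (hS : ∀ ⦃a b : V⦄ (h : G.Adj a b), (S.path h).length = 2)
include hS

theorem adj_emb_mid {a b : V} (h : G.Adj a b) : G'.Adj (S.emb a) (S.mid h) := by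
  simpa [mid] using (S.path h).adj_getVert_succ (i := 0) (by rw [hS h]; norm_num)

theorem adj_mid_emb {a b : V} (h : G.Adj a b) : G'.Adj (S.mid h) (S.emb b) := by
  have := (S.path h).adj_getVert_succ (i := 1) (by rw [hS h]; norm_num)
  rwa [(S.path h).getVert_of_length_le (hS h).le] at this

theorem emb_ne_mid {a b : V} (h : G.Adj a b) (x : V) : S.emb x ≠ S.mid h := by
  intro hx
  rcases S.internal_new h x (hx ▸ (S.path h).getVert_mem_support 1) with rfl | rfl
  · exact (adj_emb_mid hS h).ne hx
  · exact (adj_mid_emb hS h).ne hx.symm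

theorem mid_symm {a b : V} (h : G.Adj a b) : S.mid h.symm = S.mid h := by
  rw [mid, S.path_symm h, Walk.getVert_reverse, hS h]
  rfl

theorem mid_eq_mid_iff {a b c d : V} (hab : G.Adj a b) (hcd : G.Adj c d) :
    S.mid hab = S.mid hcd ↔ s(a, b) = s(c, d) := by
  refine ⟨fun he => ?_, fun he => ?_⟩
  · by_contra hne
    obtain ⟨x, hx⟩ := S.internally_disjoint hab hcd hne (S.mid hab)
      ((S.path hab).getVert_mem_support 1) (he ▸ (S.path hcd).getVert_mem_support 1)
    exact emb_ne_mid hS hab x hx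
  · rcases Sym2.eq_iff.mp he with ⟨rfl, rfl⟩ | ⟨rfl, rfl⟩
    · rfl
    · exact (mid_symm hS hab).symm

variable {α : Type*} {f : W → α} (hf : NonRepColoring G' f)
include hf

theorem not_repetitive_subdivided_path_two {a b c : V} (hab : G.Adj a b) (hbc : G.Adj b c)
    (hac : a ≠ c) :
    ¬(f (S.emb a) = f (S.emb b) ∧ f (S.mid hab) = f (S.mid hbc)) := by
  rintro ⟨h₁, h₂⟩
  refine hf.map_ne_map_of_isChain (l₁ := [S.emb a, S.mid hab]) (l₂ := [S.emb b, S.mid hbc])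
    (by simp) ?_ ?_ (by simp [h₁, h₂])
  · simp [S.emb.injective.eq_iff, emb_ne_mid hS, (emb_ne_mid hS _ _).symm, mid_eq_mid_iff hS,
      hab.ne, hac]
  · simp [adj_emb_mid hS, adj_mid_emb hS]

theorem not_repetitive_subdivided_path_four {a b c d e : V} (hab : G.Adj a b) (hbc : G.Adj b c)
    (hcd : G.Adj c d) (hde : G.Adj d e) (hac : a ≠ c) (had : a ≠ d) (hbd : b ≠ d) (hce : c ≠ e) :
    ¬(f (S.emb a) = f (S.emb c) ∧ f (S.emb b) = f (S.emb d) ∧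
      f (S.mid hab) = f (S.mid hcd) ∧ f (S.mid hbc) = f (S.mid hde)) := by
  rintro ⟨h₁, h₂, h₃, h₄⟩
  refine hf.map_ne_map_of_isChain (l₁ := [S.emb a, S.mid hab, S.emb b, S.mid hbc])
    (l₂ := [S.emb c, S.mid hcd, S.emb d, S.mid hde]) (by simp) ?_ ?_ (by simp [h₁, h₂, h₃, h₄])
  · simp [S.emb.injective.eq_iff, emb_ne_mid hS, (emb_ne_mid hS _ _).symm, mid_eq_mid_iff hS,
      hab.ne, hbc.ne, hcd.ne, hac, had, hbd, hce]
  · simp [adj_emb_mid hS, adj_mid_emb hS]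

end

section

variable {V W α : Type*} [LinearOrder V] {G : SimpleGraph V} {G' : SimpleGraph W}
  (S : SubdivisionWitness G G') (f : W → α)

def profile (v : V) : α × Set (α × α) × Set (α × α) :=
  (f (S.emb v), {p | ∃ w, ∃ h : G.Adj v w, v < w ∧ p = (f (S.emb w), f (S.mid h))},
    {p | ∃ w, ∃ h : G.Adj v w, w < v ∧ p = (f (S.emb w), f (S.mid h))})

variable {S f}

theorem exists_adj_of_profile_eq {a b c : V} (he : S.profile f a = S.profile f b)
    (hac : G.Adj a c) : ∃ w, ∃ hbw : G.Adj b w, (a < c ↔ b < w) ∧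
      f (S.emb w) = f (S.emb c) ∧ f (S.mid hbw) = f (S.mid hac) := by
  rcases hac.ne.lt_or_gt with hlt | hgt
  · have hmem : (f (S.emb c), f (S.mid hac)) ∈ (S.profile f a).2.1 := ⟨c, hac, hlt, rfl⟩
    rw [he] at hmem
    obtain ⟨w, hbw, hbw', hp⟩ := hmem
    exact ⟨w, hbw, iff_of_true hlt hbw', (Prod.ext_iff.mp hp).1.symm, (Prod.ext_iff.mp hp).2.symm⟩
  · have hmem : (f (S.emb c), f (S.mid hac)) ∈ (S.profile f a).2.2 := ⟨c, hac, hgt, rfl⟩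
    rw [he] at hmem
    obtain ⟨w, hbw, hwb, hp⟩ := hmem
    exact ⟨w, hbw, iff_of_false hgt.not_gt hwb.not_gt, (Prod.ext_iff.mp hp).1.symm,
      (Prod.ext_iff.mp hp).2.symm⟩

variable (hS : ∀ ⦃a b : V⦄ (h : G.Adj a b), (S.path h).length = 2) (hf : NonRepColoring G' f)
include hS hf

theorem profile_ne_of_adj {u v : V} (huv : G.Adj u v) : S.profile f u ≠ S.profile f v := by
  intro he
  obtain ⟨w, hvw, hdir, hcol, hmid⟩ := exists_adj_of_profile_eq he huv
  have hwu : u ≠ w := by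
    rintro rfl
    rcases huv.ne.lt_or_gt with h | h
    exacts [lt_asymm h (hdir.mp h), lt_asymm h (hdir.mpr h)]
  exact not_repetitive_subdivided_path_two hS hf huv hvw hwu ⟨congrArg Prod.fst he, hmid.symm⟩

theorem color_mid_eq_of_profile_eq {b c d : V} (hbc : G.Adj b c) (hcd : G.Adj c d) (hbd : b ≠ d)
    (he : S.profile f b = S.profile f d) : f (S.mid hbc) = f (S.mid hcd) := by
  by_contra hne
  have hcol : f (S.emb b) = f (S.emb d) := congrArg Prod.fst he
  obtain ⟨w, hdw, -, hw, hwm⟩ := exists_adj_of_profile_eq he hbc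
  obtain ⟨w', hbw', -, hw', hw'm⟩ := exists_adj_of_profile_eq he.symm hcd.symm
  rw [mid_symm hS hcd] at hw'm
  have hcw : c ≠ w := by
    rintro rfl
    exact hne (by rw [← hwm, ← mid_symm hS hcd])
  have hw'c : w' ≠ c := by
    rintro rfl
    exact hne hw'm
  by_cases hw'd : w' = d
  · subst hw'd
    exact not_repetitive_subdivided_path_two hS hf hbw' hcd.symm hbc.ne
      ⟨hcol, by rw [hw'm, mid_symm hS hcd]⟩
  · exact not_repetitive_subdivided_path_four hS hf hbw'.symm hbc hcd hdw hw'c hw'd hbd hcw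
      ⟨hw', hcol, by rw [mid_symm hS hbw', hw'm], hwm.symm⟩

theorem acyclicColoring_profile : AcyclicColoring G (S.profile f) :=
  acyclicColoring_of_forall_alternating_path (fun _ _ h => profile_ne_of_adj hS hf h)
    fun _ _ _ _ _ h₀₁ h₁₂ h₂₃ h₃₄ h₀₂ h₀₃ h₁₃ h₂₄ e₀₂ e₁₃ e₂₄ =>
      not_repetitive_subdivided_path_four hS hf h₀₁ h₁₂ h₂₃ h₃₄ h₀₂ h₀₃ h₁₃ h₂₄
        ⟨congrArg Prod.fst e₀₂, congrArg Prod.fst e₁₃,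
          (color_mid_eq_of_profile_eq hS hf h₀₁ h₁₂ h₀₂ e₀₂).trans
            (color_mid_eq_of_profile_eq hS hf h₁₂ h₂₃ h₁₃ e₁₃),
          (color_mid_eq_of_profile_eq hS hf h₁₂ h₂₃ h₁₃ e₁₃).trans
            (color_mid_eq_of_profile_eq hS hf h₂₃ h₃₄ h₂₄ e₂₄)⟩

end

end SubdivisionWitness

theorem stmt_15_general {V W : Type*}
    (G : SimpleGraph V) (G' : SimpleGraph W) (hsub : IsExactSubdivision 1 G G')
    (k : ℕ) (f : W → Fin k) (hf : NonRepColoring G' f) :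
    chiA G ≤ k * 2 ^ (2 * k ^ 2) := by
  obtain ⟨S, hS⟩ := hsub
  let _ : LinearOrder V := WellOrderingRel.isWellOrder.linearOrder
  calc chiA G ≤ Fintype.card (Fin k × Set (Fin k × Fin k) × Set (Fin k × Fin k)) :=
        chiA_le_card (S.acyclicColoring_profile hS hf)
    _ = k * 2 ^ (2 * k ^ 2) := by
        simp only [Fintype.card_prod, Fintype.card_set, Fintype.card_fin]
        ring

/-- If the `1`-subdivision `G'` of `G` admits a non-repetitive colouring
with `k` colours, then `χₐ(G) ≤ k·2^{2k²}`. -/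
theorem stmt_15 {V W : Type*} [Fintype V] [Fintype W]
    (G : SimpleGraph V) (G' : SimpleGraph W) (hsub : IsExactSubdivision 1 G G')
    (k : ℕ) (f : W → Fin k) (hf : NonRepColoring G' f) :
    chiA G ≤ k * 2 ^ (2 * k ^ 2) :=
  stmt_15_general G G' hsub k f hf
end
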